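/- Let 2/3 < ν < 4/5 and define S_SG(ζ) := tan((ζ + iπν)/(2i)) / tan((ζ − iπν)/(2i)). Then S_SG has a simple pole at ζ = iπν with residue 2i·tan(πν), i.e. the limit as ζ → iπν of (ζ − iπν)·S_SG(ζ) equals 2i·tan(πν). Moreover this residue lies in −iℝ₊, i.e. 2i·tan(πν) = i·c with c = 2·tan(πν) < 0. -/
import Mathlib


open Complex Filter Topology

/-- The sine-Gordon breather–breather (b₁b₁) scattering function. -/
noncomputable def SSG (ν : ℝ) (ζ : ℂ) : ℂ :=
  Complex.tan ((ζ + Complex.I * (Real.pi : ℂ) * (ν : ℂ)) / (2 * Complex.I)) /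
  Complex.tan ((ζ - Complex.I * (Real.pi : ℂ) * (ν : ℂ)) / (2 * Complex.I))

lemma tendsto_self_div_tan :
    Filter.Tendsto (fun z : ℂ => z / Complex.tan z) (𝓝[≠] (0:ℂ)) (𝓝 1) := by
  have h : HasDerivAt Complex.tan 1 0 := by
    simpa using Complex.hasDerivAt_tan (by simp : Complex.cos 0 ≠ 0)
  have h2 := hasDerivAt_iff_tendsto_slope.mp h
  have h3 : Filter.Tendsto (fun z : ℂ => Complex.tan z / z) (𝓝[≠] (0:ℂ)) (𝓝 1) := by
    refine h2.congr (fun z => ?_)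
    simp [slope_def_field]
  have h4 := h3.inv₀ one_ne_zero
  simpa [inv_div] using h4

/-- S_SG has a simple pole at ζ = iπν with residue
lim_{ζ→iπν} (ζ − iπν)·S_SG(ζ) = 2i·tan(πν), and this residue lies in −iℝ₊,
i.e. it is i·c with c = 2·tan(πν) < 0. -/
theorem SSG_s_channel_residue (ν : ℝ) (h1 : 2/3 < ν) (h2 : ν < 4/5) :
    Filter.Tendsto
      (fun ζ : ℂ => (ζ - Complex.I * (Real.pi : ℂ) * (ν : ℂ)) * SSG ν ζ)
      (𝓝[≠] (Complex.I * (Real.pi : ℂ) * (ν : ℂ)))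
      (𝓝 (2 * Complex.I * ((Real.tan (Real.pi * ν) : ℝ) : ℂ))) ∧
    2 * Real.tan (Real.pi * ν) < 0 := by
  have hpi := Real.pi_pos
  set a : ℂ := Complex.I * (Real.pi : ℂ) * (ν : ℂ) with ha
  have h2I : (2 * Complex.I : ℂ) ≠ 0 := by simp [Complex.I_ne_zero]
  -- range facts: π/2 < πν < π
  have hν0 : (0:ℝ) < ν := by linarith
  have hlow : Real.pi / 2 < Real.pi * ν := by nlinarith
  have hhigh : Real.pi * ν < Real.pi := by nlinarith
  have hcos : Real.cos (Real.pi * ν) < 0 :=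
    Real.cos_neg_of_pi_div_two_lt_of_lt hlow (by linarith)
  have htan_neg : Real.tan (Real.pi * ν) < 0 := by
    have hsin : 0 < Real.sin (Real.pi * ν) := Real.sin_pos_of_pos_of_lt_pi (by positivity) hhigh
    rw [Real.tan_eq_sin_div_cos]
    exact div_neg_of_pos_of_neg hsin hcos
  refine ⟨?_, by linarith⟩
  -- the map ζ ↦ (ζ - a)/(2I) sends 𝓝[≠] a into 𝓝[≠] 0
  have hmap : Filter.Tendsto (fun ζ : ℂ => (ζ - a) / (2 * Complex.I)) (𝓝[≠] a) (𝓝[≠] (0:ℂ)) := by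
    rw [tendsto_nhdsWithin_iff]
    constructor
    · have hc : Filter.Tendsto (fun ζ : ℂ => (ζ - a) / (2 * Complex.I)) (𝓝 a)
          (𝓝 ((a - a) / (2 * Complex.I))) :=
        ((continuous_id.sub continuous_const).div_const _).tendsto a
      simpa using hc.mono_left nhdsWithin_le_nhds
    · filter_upwards [eventually_mem_nhdsWithin] with ζ hζ
      simp only [Set.mem_compl_iff, Set.mem_singleton_iff] at hζ ⊢
      rw [div_eq_zero_iff]
      push_neg
      exact ⟨sub_ne_zero.mpr hζ, h2I⟩
  have hpart1 : Filter.Tendsto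
      (fun ζ : ℂ => ((ζ - a) / (2 * Complex.I)) / Complex.tan ((ζ - a) / (2 * Complex.I)))
      (𝓝[≠] a) (𝓝 1) := tendsto_self_div_tan.comp hmap
  -- the numerator tan((ζ+a)/(2I)) tends to tan(πν)
  have hkey : (a + a) / (2 * Complex.I) = ((Real.pi * ν : ℝ) : ℂ) := by
    rw [ha]
    push_cast
    field_simp
    ring
  have hcosC : Complex.cos (((Real.pi * ν : ℝ) : ℂ)) ≠ 0 := by
    rw [← Complex.ofReal_cos]
    exact_mod_cast hcos.ne
  have hcont : ContinuousAt Complex.tan (((Real.pi * ν : ℝ) : ℂ)) :=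
    (Complex.continuousAt_tan).mpr hcosC
  have hpart2 : Filter.Tendsto (fun ζ : ℂ => Complex.tan ((ζ + a) / (2 * Complex.I)))
      (𝓝[≠] a) (𝓝 (Complex.tan (((Real.pi * ν : ℝ) : ℂ)))) := by
    have hc : Filter.Tendsto (fun ζ : ℂ => (ζ + a) / (2 * Complex.I)) (𝓝 a)
        (𝓝 ((a + a) / (2 * Complex.I))) :=
      ((continuous_id.add continuous_const).div_const _).tendsto a
    rw [hkey] at hc
    exact (hcont.tendsto.comp hc).mono_left nhdsWithin_le_nhds
  have hfull := (Filter.Tendsto.mul (tendsto_const_nhds (x := (2 * Complex.I : ℂ))) hpart1).mul hpart2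
  have heq : ∀ ζ : ℂ, (ζ - a) * SSG ν ζ =
      2 * Complex.I * (((ζ - a) / (2 * Complex.I)) / Complex.tan ((ζ - a) / (2 * Complex.I))) *
        Complex.tan ((ζ + a) / (2 * Complex.I)) := by
    intro ζ
    have hcancel : 2 * Complex.I * ((ζ - a) / (2 * Complex.I)) = ζ - a := by
      field_simp
    have h5 : 2 * Complex.I *
        (((ζ - a) / (2 * Complex.I)) / Complex.tan ((ζ - a) / (2 * Complex.I))) =
        (ζ - a) / Complex.tan ((ζ - a) / (2 * Complex.I)) := by
      rw [← mul_div_assoc, hcancel]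
    rw [SSG, ← ha, h5]
    ring
  have hres : (2 * Complex.I : ℂ) * 1 * Complex.tan (((Real.pi * ν : ℝ) : ℂ)) =
      2 * Complex.I * ((Real.tan (Real.pi * ν) : ℝ) : ℂ) := by
    rw [mul_one, Complex.ofReal_tan]
  rw [hres] at hfull
  exact hfull.congr (fun ζ => (heq ζ).symm)
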